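/- A product of pure states inherits k-UDA: if |ψ⟩⟨ψ| on ⊗_{i=1}^m H_{A_i} and |φ⟩⟨φ| on ⊗_{i=1}^n H_{B_i} are both pure k-UDA states, then the pure state |ψ⟩⟨ψ| ⊗ |φ⟩⟨φ| is a k-UDA state of the (m+n)-partite system. -/

import Mathlib

open scoped BigOperators ComplexOrder

abbrev Idx {ι : Type} (κ : ι → Type) : Type := ∀ i, κ i

def IsDensity {α : Type} [Fintype α] (M : Matrix α α ℂ) : Prop :=
  M.PosSemidef ∧ M.trace = 1

def pureState {α : Type} (ψ : α → ℂ) : Matrix α α ℂ :=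
  fun a b => ψ a * star (ψ b)

noncomputable def ptrace {ι : Type} [Fintype ι] [DecidableEq ι] (κ : ι → Type)
    [∀ i, Fintype (κ i)] (S : Finset ι) (M : Matrix (Idx κ) (Idx κ) ℂ) :
    Matrix (∀ i : {i // i ∈ S}, κ i) (∀ i : {i // i ∈ S}, κ i) ℂ :=
  fun a b => ∑ c : ∀ i : {i // i ∉ S}, κ i,
    M (fun i => if h : i ∈ S then a ⟨i, h⟩ else c ⟨i, h⟩)
      (fun i => if h : i ∈ S then b ⟨i, h⟩ else c ⟨i, h⟩)

def IsUDA {ι : Type} [Fintype ι] [DecidableEq ι] (κ : ι → Type)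
    [∀ i, Fintype (κ i)] (k : ℕ) (ρ : Matrix (Idx κ) (Idx κ) ℂ) : Prop :=
  ∀ σ : Matrix (Idx κ) (Idx κ) ℂ, IsDensity σ →
    (∀ S : Finset ι, S.card = k → ptrace κ S σ = ptrace κ S ρ) → σ = ρ

instance sumElimFintype {ι₁ ι₂ : Type} {κ₁ : ι₁ → Type} {κ₂ : ι₂ → Type}
    [∀ i, Fintype (κ₁ i)] [∀ i, Fintype (κ₂ i)] :
    ∀ i, Fintype (Sum.elim κ₁ κ₂ i)
  | .inl i => inferInstanceAs (Fintype (κ₁ i))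
  | .inr i => inferInstanceAs (Fintype (κ₂ i))

def tensProd {ι₁ ι₂ : Type} {κ₁ : ι₁ → Type} {κ₂ : ι₂ → Type}
    (ρ : Matrix (Idx κ₁) (Idx κ₁) ℂ) (σ : Matrix (Idx κ₂) (Idx κ₂) ℂ) :
    Matrix (Idx (Sum.elim κ₁ κ₂)) (Idx (Sum.elim κ₁ κ₂)) ℂ :=
  fun a b => ρ (fun i => a (.inl i)) (fun i => b (.inl i)) *
             σ (fun i => a (.inr i)) (fun i => b (.inr i))

/-! If `σ` has the same `k`-marginals as `|ψ⟩⟨ψ| ⊗ |φ⟩⟨φ|`, then every `k`-marginal of a reduced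
state `σ_A` or `σ_B` is a `k`-marginal of `σ`, so the `k`-UDA property of the two factors forces
`σ_A = |ψ⟩⟨ψ|` and `σ_B = |φ⟩⟨φ|`. A positive semidefinite `σ` with pure reduced state
`σ_A = |ψ⟩⟨ψ|` is a product: with `P = |ψ⟩⟨ψ| ⊗ 1` we get `tr (σ (1 - P)) = tr (σ_A (1 - |ψ⟩⟨ψ|)) = 0`,
hence `σ (1 - P) = 0`, so `σ = P σ P`, which is of the form `|ψ⟩⟨ψ| ⊗ C` with `C = σ_B`. -/

open scoped Kronecker

namespace Matrix

variable {X Y R : Type*}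

def traceSnd [Fintype Y] [AddCommMonoid R] (M : Matrix (X × Y) (X × Y) R) : Matrix X X R :=
  fun x x' => ∑ y, M (x, y) (x', y)

def traceFst [Fintype X] [AddCommMonoid R] (M : Matrix (X × Y) (X × Y) R) : Matrix Y Y R :=
  fun y y' => ∑ x, M (x, y) (x, y')

lemma trace_traceSnd [Fintype X] [Fintype Y] [AddCommMonoid R] (M : Matrix (X × Y) (X × Y) R) :
    (traceSnd M).trace = M.trace := by
  simp only [trace, diag, traceSnd, Fintype.sum_prod_type]

lemma trace_traceFst [Fintype X] [Fintype Y] [AddCommMonoid R] (M : Matrix (X × Y) (X × Y) R) :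
    (traceFst M).trace = M.trace := by
  simp only [trace, diag, traceFst, Fintype.sum_prod_type]
  exact Finset.sum_comm

lemma traceSnd_kronecker [Fintype Y] [CommSemiring R] (A : Matrix X X R) (B : Matrix Y Y R) :
    traceSnd (A ⊗ₖ B) = B.trace • A := by
  ext x x'
  simp [traceSnd, trace, ← Finset.mul_sum, mul_comm]

lemma traceFst_kronecker [Fintype X] [CommSemiring R] (A : Matrix X X R) (B : Matrix Y Y R) :
    traceFst (A ⊗ₖ B) = A.trace • B := by
  ext y y'
  simp [traceFst, trace, Finset.sum_mul]

lemma trace_mul_kronecker_one [Fintype X] [Fintype Y] [CommSemiring R] [DecidableEq Y]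
    (M : Matrix (X × Y) (X × Y) R) (A : Matrix X X R) :
    (M * (A ⊗ₖ 1)).trace = (traceSnd M * A).trace := by
  simp only [trace, diag_apply, mul_apply, kroneckerMap_apply, one_apply, mul_ite, mul_one,
    mul_zero, Fintype.sum_prod_type, Finset.sum_ite_eq', Finset.mem_univ, if_true, traceSnd,
    Finset.sum_mul]
  exact Finset.sum_congr rfl fun _ _ => Finset.sum_comm

lemma PosSemidef.traceSnd [Fintype Y] [Ring R] [PartialOrder R] [StarRing R] [AddLeftMono R]
    {M : Matrix (X × Y) (X × Y) R} (hM : M.PosSemidef) : (traceSnd M).PosSemidef := by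
  have hsum : Matrix.traceSnd M = ∑ y, M.submatrix (fun x => (x, y)) (fun x => (x, y)) := by
    ext x x'
    simp [Matrix.traceSnd, Matrix.sum_apply]
  rw [hsum]
  exact Finset.sum_induction _ _ (fun _ _ ha hb => ha.add hb) .zero fun y _ => hM.submatrix _

lemma PosSemidef.traceFst [Fintype X] [Ring R] [PartialOrder R] [StarRing R] [AddLeftMono R]
    {M : Matrix (X × Y) (X × Y) R} (hM : M.PosSemidef) : (traceFst M).PosSemidef := by
  have hsum : Matrix.traceFst M = ∑ x, M.submatrix (fun y => (x, y)) (fun y => (x, y)) := by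
    ext y y'
    simp [Matrix.traceFst, Matrix.sum_apply]
  rw [hsum]
  exact Finset.sum_induction _ _ (fun _ _ ha hb => ha.add hb) .zero fun x _ => hM.submatrix _

open scoped MatrixOrder in
lemma PosSemidef.mul_eq_zero_of_trace_mul_eq_zero {𝕜 : Type*} [RCLike 𝕜] [Fintype X]
    {A B : Matrix X X 𝕜} (hA : A.PosSemidef) (hB : B.PosSemidef) (h : (A * B).trace = 0) :
    A * B = 0 := by
  classical
  obtain ⟨a, rfl⟩ := CStarAlgebra.nonneg_iff_eq_star_mul_self.mp hA.nonneg
  obtain ⟨b, rfl⟩ := CStarAlgebra.nonneg_iff_eq_star_mul_self.mp hB.nonneg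
  simp only [star_eq_conjTranspose] at h ⊢
  have hab : a * bᴴ = 0 := by
    -- `tr (aᴴ a bᴴ b) = tr ((a bᴴ)ᴴ (a bᴴ))`
    rw [← trace_conjTranspose_mul_self_eq_zero_iff, ← h, conjTranspose_mul,
      conjTranspose_conjTranspose, mul_assoc, trace_mul_comm]
    simp only [mul_assoc]
  rw [mul_assoc, ← mul_assoc a, hab, zero_mul, mul_zero]

end Matrix

lemma IsDensity.traceSnd {X Y : Type} [Fintype X] [Fintype Y] {σ : Matrix (X × Y) (X × Y) ℂ}
    (hσ : IsDensity σ) : IsDensity (Matrix.traceSnd σ) :=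
  ⟨hσ.1.traceSnd, (Matrix.trace_traceSnd σ).trans hσ.2⟩

lemma IsDensity.traceFst {X Y : Type} [Fintype X] [Fintype Y] {σ : Matrix (X × Y) (X × Y) ℂ}
    (hσ : IsDensity σ) : IsDensity (Matrix.traceFst σ) :=
  ⟨hσ.1.traceFst, (Matrix.trace_traceFst σ).trans hσ.2⟩

section PureState

open Matrix

variable {X : Type} {ψ : X → ℂ}

lemma pureState_eq_vecMulVec (ψ : X → ℂ) : pureState ψ = vecMulVec ψ (star ψ) := rfl

lemma trace_pureState [Fintype X] (hψ : ∑ x, ψ x * star (ψ x) = 1) :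
    (pureState ψ).trace = 1 :=
  hψ

lemma isHermitian_pureState (ψ : X → ℂ) : (pureState ψ).IsHermitian := by
  ext x x'
  simp [pureState, mul_comm]

lemma pureState_mul_self [Fintype X] (hψ : ∑ x, ψ x * star (ψ x) = 1) :
    pureState ψ * pureState ψ = pureState ψ := by
  have hnorm : star ψ ⬝ᵥ ψ = 1 := by rw [dotProduct_comm]; exact hψ
  rw [pureState_eq_vecMulVec, vecMulVec_mul_vecMulVec, hnorm, one_smul]

lemma posSemidef_one_sub_pureState [Fintype X] [DecidableEq X]
    (hψ : ∑ x, ψ x * star (ψ x) = 1) : (1 - pureState ψ).PosSemidef := by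
  have hQ : (1 - pureState ψ)ᴴ * (1 - pureState ψ) = 1 - pureState ψ := by
    rw [(isHermitian_one.sub (isHermitian_pureState ψ)).eq, sub_mul, mul_sub, mul_sub, one_mul,
      mul_one, one_mul, pureState_mul_self hψ, sub_self, sub_zero]
  exact hQ ▸ posSemidef_conjTranspose_mul_self _

lemma pureState_kronecker_one_mul_mul [Fintype X] {Y : Type} [Fintype Y] [DecidableEq Y]
    (ψ : X → ℂ) (M : Matrix (X × Y) (X × Y) ℂ) :
    (pureState ψ ⊗ₖ (1 : Matrix Y Y ℂ)) * M * (pureState ψ ⊗ₖ 1) =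
      pureState ψ ⊗ₖ of fun y y' => ∑ x, ∑ x', star (ψ x) * M (x, y) (x', y') * ψ x' := by
  ext ⟨x, y⟩ ⟨x', y'⟩
  simp only [mul_apply, kronecker_apply, of_apply, Fintype.sum_prod_type, one_apply, pureState,
    Finset.mul_sum, Finset.sum_mul, mul_ite, mul_one, mul_zero, ite_mul, zero_mul,
    Finset.sum_ite_irrel, Finset.sum_ite_eq, Finset.sum_ite_eq', Finset.mem_univ, if_true,
    Finset.sum_const_zero]
  rw [Finset.sum_comm]
  exact Finset.sum_congr rfl fun _ _ => Finset.sum_congr rfl fun _ _ => by ring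

lemma Matrix.PosSemidef.eq_pureState_kronecker_traceFst [Fintype X] [DecidableEq X] {Y : Type}
    [Fintype Y] [DecidableEq Y] {σ : Matrix (X × Y) (X × Y) ℂ} (hσ : σ.PosSemidef)
    (hψ : ∑ x, ψ x * star (ψ x) = 1) (h : Matrix.traceSnd σ = pureState ψ) :
    σ = pureState ψ ⊗ₖ Matrix.traceFst σ := by
  set P := pureState ψ ⊗ₖ (1 : Matrix Y Y ℂ)
  have hPQ : (1 - pureState ψ) ⊗ₖ (1 : Matrix Y Y ℂ) = 1 - P := by
    rw [eq_sub_iff_add_eq, ← add_kronecker, sub_add_cancel, one_kronecker_one]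
  have hσQ : σ * (1 - P) = 0 := by
    refine hσ.mul_eq_zero_of_trace_mul_eq_zero (hPQ ▸ ?_) ?_
    · exact (posSemidef_one_sub_pureState hψ).kronecker .one
    · rw [← hPQ, trace_mul_kronecker_one, h, mul_sub, mul_one, pureState_mul_self hψ, sub_self,
        trace_zero]
  have hσP : σ = σ * P := by rwa [mul_sub, mul_one, sub_eq_zero] at hσQ
  have hPσ : σ = P * σ := by
    simpa [conjTranspose_mul, hσ.1.eq, P, conjTranspose_kronecker, (isHermitian_pureState ψ).eq]
      using congrArg (·ᴴ) hσP
  obtain ⟨C, hC⟩ : ∃ C, σ = pureState ψ ⊗ₖ C :=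
    ⟨_, by rw [hσP, hPσ, pureState_kronecker_one_mul_mul]⟩
  rw [hC, Matrix.traceFst_kronecker, trace_pureState hψ, one_smul]

end PureState

section SumParties

open Function

variable {ι₁ ι₂ : Type} {κ₁ : ι₁ → Type} {κ₂ : ι₂ → Type}

def bipartite (M : Matrix (Idx (Sum.elim κ₁ κ₂)) (Idx (Sum.elim κ₁ κ₂)) ℂ) :
    Matrix (Idx κ₁ × Idx κ₂) (Idx κ₁ × Idx κ₂) ℂ :=
  M.submatrix (Equiv.prodPiEquivSumPi κ₁ κ₂) (Equiv.prodPiEquivSumPi κ₁ κ₂)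

lemma bipartite_tensProd (ρ₁ : Matrix (Idx κ₁) (Idx κ₁) ℂ) (ρ₂ : Matrix (Idx κ₂) (Idx κ₂) ℂ) :
    bipartite (tensProd ρ₁ ρ₂) = ρ₁ ⊗ₖ ρ₂ :=
  rfl

lemma bipartite_injective : Injective (bipartite (κ₁ := κ₁) (κ₂ := κ₂)) := by
  intro M N h
  simpa [bipartite] using congrArg (·.submatrix (Equiv.prodPiEquivSumPi κ₁ κ₂).symm
    (Equiv.prodPiEquivSumPi κ₁ κ₂).symm) h

lemma IsDensity.bipartite [Fintype ι₁] [DecidableEq ι₁] [Fintype ι₂] [DecidableEq ι₂]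
    [∀ i, Fintype (κ₁ i)] [∀ i, Fintype (κ₂ i)]
    {σ : Matrix (Idx (Sum.elim κ₁ κ₂)) (Idx (Sum.elim κ₁ κ₂)) ℂ} (hσ : IsDensity σ) :
    IsDensity (bipartite σ) :=
  ⟨hσ.1.submatrix _, hσ.2 ▸ Fintype.sum_equiv (Equiv.prodPiEquivSumPi κ₁ κ₂) _ _ fun _ => rfl⟩

def liftInl (S : Finset ι₁) (a : ∀ i : {i // i ∈ S}, κ₁ i) :
    ∀ i : {i // i ∈ S.map Embedding.inl}, Sum.elim κ₁ κ₂ i.1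
  | ⟨.inl j, h⟩ => a ⟨j, by simpa using h⟩
  | ⟨.inr _, h⟩ => absurd h (by simp)

def liftInr (S : Finset ι₂) (b : ∀ i : {i // i ∈ S}, κ₂ i) :
    ∀ i : {i // i ∈ S.map Embedding.inr}, Sum.elim κ₁ κ₂ i.1
  | ⟨.inl _, h⟩ => absurd h (by simp)
  | ⟨.inr j, h⟩ => b ⟨j, by simpa using h⟩

def complMapInlEquiv (S : Finset ι₁) :
    ((∀ j : {j // j ∉ S}, κ₁ j) × ∀ j, κ₂ j) ≃
      ∀ i : {i // i ∉ S.map Embedding.inl}, Sum.elim κ₁ κ₂ i.1 where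
  toFun p
    | ⟨.inl j, h⟩ => p.1 ⟨j, by simpa using h⟩
    | ⟨.inr j, _⟩ => p.2 j
  invFun d := (fun j => d ⟨.inl j, by simpa using j.2⟩, fun j => d ⟨.inr j, by simp⟩)
  left_inv _ := rfl
  right_inv d := funext fun ⟨i, _⟩ => by cases i <;> rfl

def complMapInrEquiv (S : Finset ι₂) :
    ((∀ j, κ₁ j) × ∀ j : {j // j ∉ S}, κ₂ j) ≃
      ∀ i : {i // i ∉ S.map Embedding.inr}, Sum.elim κ₁ κ₂ i.1 where
  toFun p
    | ⟨.inl j, _⟩ => p.1 j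
    | ⟨.inr j, h⟩ => p.2 ⟨j, by simpa using h⟩
  invFun d := (fun j => d ⟨.inl j, by simp⟩, fun j => d ⟨.inr j, by simpa using j.2⟩)
  left_inv _ := rfl
  right_inv d := funext fun ⟨i, _⟩ => by cases i <;> rfl

variable [DecidableEq ι₁] [DecidableEq ι₂]

lemma dite_mem_map_inl (S : Finset ι₁) (a : ∀ i : {i // i ∈ S}, κ₁ i)
    (c : ∀ j : {j // j ∉ S}, κ₁ j) (y : ∀ j, κ₂ j) :
    (fun i => if h : i ∈ S.map Embedding.inl then liftInl S a ⟨i, h⟩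
      else complMapInlEquiv S (c, y) ⟨i, h⟩) =
      Equiv.prodPiEquivSumPi κ₁ κ₂ (fun j => if h : j ∈ S then a ⟨j, h⟩ else c ⟨j, h⟩, y) := by
  funext i
  rcases i with j | j
  · by_cases hj : j ∈ S <;>
      simp [hj, liftInl, complMapInlEquiv, Equiv.prodPiEquivSumPi, Equiv.sumPiEquivProdPi]
  · simp [complMapInlEquiv, Equiv.prodPiEquivSumPi, Equiv.sumPiEquivProdPi]

lemma dite_mem_map_inr (S : Finset ι₂) (b : ∀ i : {i // i ∈ S}, κ₂ i) (x : ∀ j, κ₁ j)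
    (c : ∀ j : {j // j ∉ S}, κ₂ j) :
    (fun i => if h : i ∈ S.map Embedding.inr then liftInr S b ⟨i, h⟩
      else complMapInrEquiv S (x, c) ⟨i, h⟩) =
      Equiv.prodPiEquivSumPi κ₁ κ₂ (x, fun j => if h : j ∈ S then b ⟨j, h⟩ else c ⟨j, h⟩) := by
  funext i
  rcases i with j | j
  · simp [complMapInrEquiv, Equiv.prodPiEquivSumPi, Equiv.sumPiEquivProdPi]
  · by_cases hj : j ∈ S <;>
      simp [hj, liftInr, complMapInrEquiv, Equiv.prodPiEquivSumPi, Equiv.sumPiEquivProdPi]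

variable [Fintype ι₁] [Fintype ι₂] [∀ i, Fintype (κ₁ i)] [∀ i, Fintype (κ₂ i)]

lemma ptrace_map_inl (M : Matrix (Idx (Sum.elim κ₁ κ₂)) (Idx (Sum.elim κ₁ κ₂)) ℂ)
    (S : Finset ι₁) (a b : ∀ i : {i // i ∈ S}, κ₁ i) :
    ptrace (Sum.elim κ₁ κ₂) (S.map Embedding.inl) M (liftInl S a) (liftInl S b) =
      ptrace κ₁ S (Matrix.traceSnd (bipartite M)) a b := by
  rw [ptrace, ← (complMapInlEquiv S).sum_comp, Fintype.sum_prod_type]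
  simp only [dite_mem_map_inl]
  rfl

lemma ptrace_map_inr (M : Matrix (Idx (Sum.elim κ₁ κ₂)) (Idx (Sum.elim κ₁ κ₂)) ℂ)
    (S : Finset ι₂) (a b : ∀ i : {i // i ∈ S}, κ₂ i) :
    ptrace (Sum.elim κ₁ κ₂) (S.map Embedding.inr) M (liftInr S a) (liftInr S b) =
      ptrace κ₂ S (Matrix.traceFst (bipartite M)) a b := by
  rw [ptrace, ← (complMapInrEquiv S).sum_comp, Fintype.sum_prod_type, Finset.sum_comm]
  simp only [dite_mem_map_inr]
  rfl

variable {k : ℕ} {ρ₁ : Matrix (Idx κ₁) (Idx κ₁) ℂ} {ρ₂ : Matrix (Idx κ₂) (Idx κ₂) ℂ}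
  {σ : Matrix (Idx (Sum.elim κ₁ κ₂)) (Idx (Sum.elim κ₁ κ₂)) ℂ}

theorem IsUDA.traceSnd_bipartite_eq (hρ₁ : IsUDA κ₁ k ρ₁) (hρ₂ : ρ₂.trace = 1)
    (hσ : IsDensity σ) (hmarg : ∀ S : Finset (ι₁ ⊕ ι₂), S.card = k →
      ptrace (Sum.elim κ₁ κ₂) S σ = ptrace (Sum.elim κ₁ κ₂) S (tensProd ρ₁ ρ₂)) :
    Matrix.traceSnd (bipartite σ) = ρ₁ := by
  refine hρ₁ _ hσ.bipartite.traceSnd fun S hS => ?_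
  ext a b
  rw [← ptrace_map_inl, hmarg _ (by rwa [Finset.card_map]), ptrace_map_inl, bipartite_tensProd,
    Matrix.traceSnd_kronecker, hρ₂, one_smul]

theorem IsUDA.traceFst_bipartite_eq (hρ₂ : IsUDA κ₂ k ρ₂) (hρ₁ : ρ₁.trace = 1)
    (hσ : IsDensity σ) (hmarg : ∀ S : Finset (ι₁ ⊕ ι₂), S.card = k →
      ptrace (Sum.elim κ₁ κ₂) S σ = ptrace (Sum.elim κ₁ κ₂) S (tensProd ρ₁ ρ₂)) :
    Matrix.traceFst (bipartite σ) = ρ₂ := by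
  refine hρ₂ _ hσ.bipartite.traceFst fun S hS => ?_
  ext a b
  rw [← ptrace_map_inr, hmarg _ (by rwa [Finset.card_map]), ptrace_map_inr, bipartite_tensProd,
    Matrix.traceFst_kronecker, hρ₁, one_smul]

end SumParties

theorem tensor_of_pure_UDA_states {m n : ℕ}
    (κA : Fin m → Type) (κB : Fin n → Type)
    [∀ i, Fintype (κA i)] [∀ i, Fintype (κB i)] (k : ℕ)
    (ψ : Idx κA → ℂ) (hψ : ∑ a, ψ a * star (ψ a) = 1)
    (φ : Idx κB → ℂ) (hφ : ∑ b, φ b * star (φ b) = 1)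
    (hψUDA : IsUDA κA k (pureState ψ))
    (hφUDA : IsUDA κB k (pureState φ)) :
    IsUDA (Sum.elim κA κB) k (tensProd (pureState ψ) (pureState φ)) := by
  classical
  intro σ hσ hmarg
  have hA := hψUDA.traceSnd_bipartite_eq (trace_pureState hφ) hσ hmarg
  have hB := hφUDA.traceFst_bipartite_eq (trace_pureState hψ) hσ hmarg
  apply bipartite_injective
  rw [bipartite_tensProd, hσ.bipartite.1.eq_pureState_kronecker_traceFst hψ hA, hB]
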